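/- arXiv:1411.7739 — 3 statements merged into one kernel-verified Lean document; each statement's English description precedes it below -/
import Mathlib

section
/- Let L₁, L₂ be positive integers and h > 0. For every finite set V ⊂ ℤ², the cell-board field satisfies 2·|Σ_{t∈V} h(t)| ≤ h·L₁·|∂ʰV| and 2·|Σ_{t∈V} h(t)| ≤ h·L₂·|∂ᵛV|; consequently 2·|Σ_{t∈V} h(t)| ≤ h·(L₁L₂/(L₁+L₂))·|∂V|. -/
/-!
Write `ε(t) = σ_{L₁}(t₁) σ_{L₂}(t₂)` with `σ_L(n) = (-1)^⌊n/L⌋`. The sign `σ_L` is the discrete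
derivative of the sawtooth `S_L(n) = σ_L(n) ((n mod L) - L/2)`, which is bounded by `L/2`. So `ε`
is the horizontal difference of `G(t) = S_{L₁}(t₁) σ_{L₂}(t₂)`, and a sum over `V` of differences
`F(t + e) - F(t)` telescopes to one term `±F(u + e)` per boundary edge `{u, u + e}`, each at most
`sup |F|`. The vertical bound is symmetric, and the last bound is the average of the first two
with weights `L₂, L₁`.
-/

open Finset

/-- Sign of the cell-board external field: `+1` on sites whose cell-coordinates
`⌊t₁/L₁⌋ + ⌊t₂/L₂⌋` (floor division) sum to an even number, and `-1` otherwise. -/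
noncomputable def cellSign (L1 L2 : ℕ) (t : ℤ × ℤ) : ℝ :=
  if Even (Int.fdiv t.1 (L1 : ℤ) + Int.fdiv t.2 (L2 : ℤ)) then 1 else -1

/-- The cell-board external field with amplitude `h`. -/
noncomputable def cellField (L1 L2 : ℕ) (h : ℝ) (t : ℤ × ℤ) : ℝ :=
  h * cellSign L1 L2 t

/-- Boundary edges of a finite set `V ⊂ ℤ²` in the direction `e`: the edge `{u, u+e}`
belongs to the boundary iff exactly one of its endpoints lies in `V`.  An edge is
represented by its base point `u`. -/
def bdry (V : Finset (ℤ × ℤ)) (e : ℤ × ℤ) : Finset (ℤ × ℤ) :=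
  (V ∪ V.image (fun u => u - e)).filter (fun u => ¬ ((u ∈ V) ↔ (u + e ∈ V)))

noncomputable def blockSign (L : ℕ) (n : ℤ) : ℝ := (-1) ^ (n / (L : ℤ))

noncomputable def blockSaw (L : ℕ) (n : ℤ) : ℝ :=
  blockSign L n * ((n % (L : ℤ) : ℤ) - (L : ℝ) / 2)

theorem abs_blockSign (L : ℕ) (n : ℤ) : |blockSign L n| = 1 := by
  simp [blockSign]

theorem cellSign_eq_mul (L1 L2 : ℕ) (t : ℤ × ℤ) :
    cellSign L1 L2 t = blockSign L1 t.1 * blockSign L2 t.2 := by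
  rw [cellSign, ← neg_one_zpow_eq_ite, blockSign, blockSign,
    Int.fdiv_eq_ediv_of_nonneg _ (by positivity), Int.fdiv_eq_ediv_of_nonneg _ (by positivity),
    zpow_add₀ (by norm_num)]

theorem abs_blockSaw_le {L : ℕ} (hL : 0 < L) (n : ℤ) : |blockSaw L n| ≤ L / 2 := by
  have hL' : (0 : ℤ) < L := by exact_mod_cast hL
  have h0 : (0 : ℝ) ≤ (n % (L : ℤ) : ℤ) := by exact_mod_cast Int.emod_nonneg n hL'.ne'
  have h1 : ((n % (L : ℤ) : ℤ) : ℝ) ≤ L := by exact_mod_cast (Int.emod_lt_of_pos n hL').le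
  rw [blockSaw, abs_mul, abs_blockSign, one_mul, abs_le]
  constructor <;> linarith

theorem blockSaw_add_one_sub {L : ℕ} (hL : 0 < L) (n : ℤ) :
    blockSaw L (n + 1) - blockSaw L n = blockSign L n := by
  have hL' : (0 : ℤ) < L := by exact_mod_cast hL
  have hdecomp := Int.emod_add_mul_ediv n L
  have h0 := Int.emod_nonneg n hL'.ne'
  have h1 := Int.emod_lt_of_pos n hL'
  simp only [blockSaw, blockSign]
  rcases (show n % L + 1 < L ∨ n % L + 1 = L by omega) with hlt | heq
  · obtain ⟨hq, hr⟩ := (Int.ediv_emod_unique (a := n + 1) (q := n / L) (r := n % L + 1) hL').mpr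
      ⟨by linear_combination hdecomp, by omega, hlt⟩
    rw [hq, hr]
    push_cast
    ring
  · obtain ⟨hq, hr⟩ := (Int.ediv_emod_unique (a := n + 1) (q := n / L + 1) (r := 0) hL').mpr
      ⟨by linear_combination hdecomp - heq, le_rfl, hL'⟩
    have hr' : ((n % (L : ℤ) : ℤ) : ℝ) = L - 1 := by
      rw [show n % (L : ℤ) = L - 1 by omega]; push_cast; ring
    rw [hq, hr, hr', zpow_add_one₀ (by norm_num)]
    push_cast
    ring

theorem sum_sub_eq_sum_bdry (V : Finset (ℤ × ℤ)) (e : ℤ × ℤ) (F : ℤ × ℤ → ℝ) :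
    ∑ t ∈ V, (F (t + e) - F t) =
      ∑ u ∈ bdry V e, ((if u ∈ V then 1 else 0) - (if u + e ∈ V then 1 else 0)) * F (u + e) := by
  classical
  have hshift : (V ∪ V.image (· - e)).filter (· + e ∈ V) = V.image (· - e) := by
    ext u
    simp only [mem_filter, mem_union, mem_image]
    constructor
    · rintro ⟨-, hu⟩; exact ⟨u + e, hu, add_sub_cancel_right u e⟩
    · rintro ⟨t, ht, rfl⟩; exact ⟨Or.inr ⟨t, ht, rfl⟩, by simpa using ht⟩
  rw [bdry, sum_filter_of_ne (fun u _ hu => by split_ifs at hu <;> simp_all)]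
  simp only [sub_mul, ite_mul, one_mul, zero_mul, sum_sub_distrib]
  rw [sum_ite_mem, inter_eq_right.mpr subset_union_left, ← sum_filter, hshift,
    sum_image (fun _ _ _ _ h => sub_left_injective h)]
  simp

theorem abs_sum_sub_le_card_bdry (V : Finset (ℤ × ℤ)) (e : ℤ × ℤ) (F : ℤ × ℤ → ℝ) {C : ℝ}
    (hF : ∀ t, |F t| ≤ C) :
    |∑ t ∈ V, (F (t + e) - F t)| ≤ C * #(bdry V e) := by
  rw [sum_sub_eq_sum_bdry, mul_comm, ← nsmul_eq_mul, ← sum_const]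
  refine (abs_sum_le_sum_abs _ _).trans (sum_le_sum fun u _ => ?_)
  rw [abs_mul, ← one_mul C]
  exact mul_le_mul (by split_ifs <;> norm_num) (hF _) (abs_nonneg _) zero_le_one

theorem two_mul_abs_sum_cellSign_le_bdry_horizontal {L1 : ℕ} (hL1 : 0 < L1) (L2 : ℕ)
    (V : Finset (ℤ × ℤ)) :
    2 * |∑ t ∈ V, cellSign L1 L2 t| ≤ L1 * #(bdry V (1, 0)) := by
  let G (t : ℤ × ℤ) : ℝ := blockSaw L1 t.1 * blockSign L2 t.2
  have hG : ∀ t, |G t| ≤ L1 / 2 := fun t => by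
    rw [abs_mul, abs_blockSign, mul_one]; exact abs_blockSaw_le hL1 t.1
  have hstep : ∀ t ∈ V, cellSign L1 L2 t = G (t + (1, 0)) - G t := fun t _ => by
    simp only [G, Prod.fst_add, Prod.snd_add, add_zero, ← sub_mul, blockSaw_add_one_sub hL1,
      cellSign_eq_mul]
  rw [sum_congr rfl hstep]
  linarith [abs_sum_sub_le_card_bdry V (1, 0) G hG]

theorem two_mul_abs_sum_cellSign_le_bdry_vertical (L1 : ℕ) {L2 : ℕ} (hL2 : 0 < L2)
    (V : Finset (ℤ × ℤ)) :
    2 * |∑ t ∈ V, cellSign L1 L2 t| ≤ L2 * #(bdry V (0, 1)) := by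
  let G (t : ℤ × ℤ) : ℝ := blockSign L1 t.1 * blockSaw L2 t.2
  have hG : ∀ t, |G t| ≤ L2 / 2 := fun t => by
    rw [abs_mul, abs_blockSign, one_mul]; exact abs_blockSaw_le hL2 t.2
  have hstep : ∀ t ∈ V, cellSign L1 L2 t = G (t + (0, 1)) - G t := fun t _ => by
    simp only [G, Prod.fst_add, Prod.snd_add, add_zero, ← mul_sub, blockSaw_add_one_sub hL2,
      cellSign_eq_mul]
  rw [sum_congr rfl hstep]
  linarith [abs_sum_sub_le_card_bdry V (0, 1) G hG]

theorem le_mul_div_add_mul_add {a p q x y : ℝ} (hp : 0 < p) (hq : 0 < q) (hx : a ≤ p * x)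
    (hy : a ≤ q * y) : a ≤ p * q / (p + q) * (x + y) := by
  rw [div_mul_eq_mul_div, le_div_iff₀ (by positivity)]
  nlinarith [mul_le_mul_of_nonneg_left hx hq.le, mul_le_mul_of_nonneg_left hy hp.le]

/-- for every finite `V ⊂ ℤ²`, the cell-board field satisfies
`2·|Σ_{t∈V} h(t)| ≤ h·L₁·|∂ʰV|`, `2·|Σ_{t∈V} h(t)| ≤ h·L₂·|∂ᵛV|`, and consequently
`2·|Σ_{t∈V} h(t)| ≤ h·(L₁L₂/(L₁+L₂))·|∂V|`. -/
theorem cellField_sum_abs_le (L1 L2 : ℕ) (hL1 : 0 < L1) (hL2 : 0 < L2)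
    (h : ℝ) (hh : 0 < h) (V : Finset (ℤ × ℤ)) :
    2 * |∑ t ∈ V, cellField L1 L2 h t| ≤ h * (L1 : ℝ) * ((bdry V (1, 0)).card : ℝ) ∧
    2 * |∑ t ∈ V, cellField L1 L2 h t| ≤ h * (L2 : ℝ) * ((bdry V (0, 1)).card : ℝ) ∧
    2 * |∑ t ∈ V, cellField L1 L2 h t| ≤
      h * ((L1 : ℝ) * (L2 : ℝ) / ((L1 : ℝ) + (L2 : ℝ))) *
        (((bdry V (1, 0)).card : ℝ) + ((bdry V (0, 1)).card : ℝ)) := by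
  have hfield :
      2 * |∑ t ∈ V, cellField L1 L2 h t| = h * (2 * |∑ t ∈ V, cellSign L1 L2 t|) := by
    simp only [cellField, ← mul_sum, abs_mul, abs_of_pos hh]
    ring
  have hhor := two_mul_abs_sum_cellSign_le_bdry_horizontal hL1 L2 V
  have hver := two_mul_abs_sum_cellSign_le_bdry_vertical L1 hL2 V
  rw [hfield, mul_assoc h, mul_assoc h, mul_assoc h]
  exact ⟨mul_le_mul_of_nonneg_left hhor hh.le, mul_le_mul_of_nonneg_left hver hh.le,
    mul_le_mul_of_nonneg_left
      (le_mul_div_add_mul_add (by positivity) (by positivity) hhor hver) hh.le⟩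
end

section
/- Let L₁, L₂ be positive integers, J > 0, h > 0, and suppose h > 2J/L₁ + 2J/L₂. Then the configuration σ_c(t) = ε(t) (equal to +1 where the cell-board field is +h and to −1 where it is −h) is a ground state of the cell-board Ising Hamiltonian: for every finite set V ⊂ ℤ², 2J·Σ_{{t,s}∈∂V, t∈V, s∉V} ε(t)ε(s) + 2h·|V| ≥ 0. -/
/-- The hypotheses are the edge-wise domination of the header, for an edge `{u, u + e}` with both
endpoints, only `u + e`, or only `u` in `V`. -/
theorem sum_bdry_add_mul_card_nonneg (V : Finset (ℤ × ℤ)) (e : ℤ × ℤ) (c p : ℤ × ℤ → ℝ) (K : ℝ)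
    (hstep : ∀ u, p (u + e) - p u ≤ K) (hin : ∀ u, p (u + e) ≤ c u + K)
    (hout : ∀ u, -p u ≤ c u) :
    0 ≤ ∑ u ∈ bdry V e, c u + K * V.card := by
  set E := V ∪ V.image (· - e)
  have hself (g : ℤ × ℤ → ℝ) : ∑ u ∈ E, (if u ∈ V then g u else 0) = ∑ u ∈ V, g u := by
    rw [Finset.sum_ite_mem, Finset.union_inter_cancel_left]
  have hshift (g : ℤ × ℤ → ℝ) :
      ∑ u ∈ E, (if u + e ∈ V then g (u + e) else 0) = ∑ u ∈ V, g u := by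
    rw [← Finset.sum_filter]
    exact Finset.sum_nbij' (· + e) (· - e) (by simp) (fun u hu => by simp [E, hu]) (by simp)
      (by simp) (fun _ _ => rfl)
  calc (0 : ℝ)
        = ∑ u ∈ E, ((if u + e ∈ V then p (u + e) else 0) - (if u ∈ V then p u else 0)) := by
        rw [Finset.sum_sub_distrib, hself, hshift, sub_self]
    _ ≤ ∑ u ∈ E, ((if ¬(u ∈ V ↔ u + e ∈ V) then c u else 0) + (if u + e ∈ V then K else 0)) := by
        refine Finset.sum_le_sum fun u _ => ?_
        by_cases hu : u ∈ V <;> by_cases hue : u + e ∈ V <;>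
          simp only [hu, hue, if_true, if_false, iff_self, iff_true, iff_false, not_true,
            not_false_eq_true] <;>
          linarith [hstep u, hin u, hout u]
    _ = ∑ u ∈ bdry V e, c u + K * V.card := by
        rw [Finset.sum_add_distrib, ← Finset.sum_filter, hshift fun _ => K]
        simp [bdry, E, mul_comm]

noncomputable def stripeSign (L : ℕ) (x : ℤ) : ℝ :=
  if Even (x.fdiv L) then 1 else -1

theorem stripeSign_mul_self (L : ℕ) (x : ℤ) : stripeSign L x * stripeSign L x = 1 := by
  unfold stripeSign; split_ifs <;> norm_num

theorem cellSign_eq_stripeSign_mul (L1 L2 : ℕ) (t : ℤ × ℤ) :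
    cellSign L1 L2 t = stripeSign L1 t.1 * stripeSign L2 t.2 := by
  unfold cellSign stripeSign
  by_cases h1 : Even (t.1.fdiv L1) <;> by_cases h2 : Even (t.2.fdiv L2) <;>
    simp [h1, h2, Int.even_add]

theorem cellSign_mul_cellSign_add_fst (L1 L2 : ℕ) (t : ℤ × ℤ) :
    cellSign L1 L2 t * cellSign L1 L2 (t + (1, 0)) =
      stripeSign L1 t.1 * stripeSign L1 (t.1 + 1) := by
  simp only [cellSign_eq_stripeSign_mul, Prod.fst_add, Prod.snd_add, add_zero]
  linear_combination (stripeSign L1 t.1 * stripeSign L1 (t.1 + 1)) * stripeSign_mul_self L2 t.2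

theorem cellSign_mul_cellSign_add_snd (L1 L2 : ℕ) (t : ℤ × ℤ) :
    cellSign L1 L2 t * cellSign L1 L2 (t + (0, 1)) =
      stripeSign L2 t.2 * stripeSign L2 (t.2 + 1) := by
  simp only [cellSign_eq_stripeSign_mul, Prod.fst_add, Prod.snd_add, add_zero]
  linear_combination (stripeSign L2 t.2 * stripeSign L2 (t.2 + 1)) * stripeSign_mul_self L1 t.1

theorem Int.add_one_ediv_emod {L : ℤ} (hL : 0 < L) (x : ℤ) :
    (x % L + 1 < L ∧ (x + 1) / L = x / L ∧ (x + 1) % L = x % L + 1) ∨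
      (x % L + 1 = L ∧ (x + 1) / L = x / L + 1 ∧ (x + 1) % L = 0) := by
  have hx := Int.mul_ediv_add_emod x L
  have h0 := Int.emod_nonneg x hL.ne'
  have h1 := Int.emod_lt_of_pos x hL
  rcases (show x % L + 1 < L ∨ x % L + 1 = L by omega) with h | h
  · exact .inl ⟨h, (Int.ediv_emod_unique hL).2 ⟨by linear_combination hx, by omega, h⟩⟩
  · exact .inr ⟨h, (Int.ediv_emod_unique hL).2 ⟨by linear_combination hx - h, le_rfl, hL⟩⟩

noncomputable def stripePotential (L : ℕ) (x : ℤ) : ℝ :=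
  2 * (x % L : ℤ) + 2 - L

theorem stripePotential_calibrates {L : ℕ} (hL : 0 < L) (x : ℤ) :
    stripePotential L (x + 1) - stripePotential L x ≤ 2 ∧
      stripePotential L (x + 1) ≤ L * (stripeSign L x * stripeSign L (x + 1)) + 2 ∧
      -stripePotential L x ≤ L * (stripeSign L x * stripeSign L (x + 1)) := by
  have hL' : (0 : ℤ) < L := by exact_mod_cast hL
  have h0 : (0 : ℝ) ≤ (x % L : ℤ) := by exact_mod_cast Int.emod_nonneg x hL'.ne'
  unfold stripePotential stripeSign
  rw [Int.fdiv_eq_ediv_of_nonneg _ hL'.le, Int.fdiv_eq_ediv_of_nonneg _ hL'.le]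
  rcases Int.add_one_ediv_emod hL' x with ⟨hlt, hdiv, hmod⟩ | ⟨heq, hdiv, hmod⟩
  · have : ((x % L : ℤ) : ℝ) + 1 < L := by exact_mod_cast hlt
    rw [hdiv, hmod]
    split_ifs <;> push_cast <;> refine ⟨?_, ?_, ?_⟩ <;> linarith
  · have : ((x % L : ℤ) : ℝ) + 1 = L := by exact_mod_cast heq
    simp only [hdiv, hmod, Int.even_add_one]
    split_ifs <;> push_cast <;> refine ⟨?_, ?_, ?_⟩ <;> linarith

theorem neg_two_div_mul_card_le_sum_bdry_stripeSign {L : ℕ} (hL : 0 < L) (V : Finset (ℤ × ℤ))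
    (e : ℤ × ℤ) (π : ℤ × ℤ → ℤ) (hπ : ∀ u, π (u + e) = π u + 1) :
    -(2 / (L : ℝ) * V.card) ≤ ∑ u ∈ bdry V e, stripeSign L (π u) * stripeSign L (π u + 1) := by
  have hL' : (0 : ℝ) < L := by exact_mod_cast hL
  have key := sum_bdry_add_mul_card_nonneg V e
    (fun u => L * (stripeSign L (π u) * stripeSign L (π u + 1)))
    (fun u => stripePotential L (π u)) 2
    (fun u => by simpa only [hπ] using (stripePotential_calibrates hL (π u)).1)
    (fun u => by simpa only [hπ] using (stripePotential_calibrates hL (π u)).2.1)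
    (fun u => (stripePotential_calibrates hL (π u)).2.2)
  rw [← Finset.mul_sum] at key
  calc -(2 / (L : ℝ) * V.card) = -(2 * V.card) / L := by ring
    _ ≤ _ := by rw [div_le_iff₀ hL']; linarith

theorem sigma_c_ground_state_general (L1 L2 : ℕ) (hL1 : 0 < L1) (hL2 : 0 < L2)
    (J h : ℝ) (hJ : 0 < J)
    (hcond : h > 2 * J / (L1 : ℝ) + 2 * J / (L2 : ℝ)) :
    ∀ V : Finset (ℤ × ℤ),
      2 * J * ((∑ u ∈ bdry V (1, 0), cellSign L1 L2 u * cellSign L1 L2 (u + (1, 0))) +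
               (∑ u ∈ bdry V (0, 1), cellSign L1 L2 u * cellSign L1 L2 (u + (0, 1)))) +
        2 * h * (V.card : ℝ) ≥ 0 := by
  intro V
  have horiz : -(2 / (L1 : ℝ) * V.card) ≤
      ∑ u ∈ bdry V (1, 0), cellSign L1 L2 u * cellSign L1 L2 (u + (1, 0)) := by
    simpa only [cellSign_mul_cellSign_add_fst] using
      neg_two_div_mul_card_le_sum_bdry_stripeSign hL1 V (1, 0) Prod.fst fun _ => rfl
  have vert : -(2 / (L2 : ℝ) * V.card) ≤
      ∑ u ∈ bdry V (0, 1), cellSign L1 L2 u * cellSign L1 L2 (u + (0, 1)) := by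
    simpa only [cellSign_mul_cellSign_add_snd] using
      neg_two_div_mul_card_le_sum_bdry_stripeSign hL2 V (0, 1) Prod.snd fun _ => rfl
  have hgap : 0 < h - (2 * J / L1 + 2 * J / L2) := sub_pos.2 hcond
  calc (0 : ℝ) ≤ 2 * V.card * (h - (2 * J / L1 + 2 * J / L2)) := by positivity
    _ = 2 * J * (-(2 / (L1 : ℝ) * V.card) + -(2 / (L2 : ℝ) * V.card)) + 2 * h * V.card := by ring
    _ ≤ _ := by gcongr

/-- if `h > 2J/L₁ + 2J/L₂`, the configuration `σ_c = ε` (equal to `+1`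
where the cell-board field is `+h` and `−1` where it is `−h`) is a ground state:
for every finite `V ⊂ ℤ²`,
`2J·Σ_{{t,s}∈∂V} ε(t)ε(s) + 2h·|V| ≥ 0`  (the sum runs over the boundary edges). -/
theorem sigma_c_ground_state (L1 L2 : ℕ) (hL1 : 0 < L1) (hL2 : 0 < L2)
    (J h : ℝ) (hJ : 0 < J) (hh : 0 < h)
    (hcond : h > 2 * J / (L1 : ℝ) + 2 * J / (L2 : ℝ)) :
    ∀ V : Finset (ℤ × ℤ),
      2 * J * ((∑ u ∈ bdry V (1, 0), cellSign L1 L2 u * cellSign L1 L2 (u + (1, 0))) +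
               (∑ u ∈ bdry V (0, 1), cellSign L1 L2 u * cellSign L1 L2 (u + (0, 1)))) +
        2 * h * (V.card : ℝ) ≥ 0 :=
  sigma_c_ground_state_general L1 L2 hL1 hL2 J h hJ hcond
end

section
/- (Peierls condition for the alternating-strips model.) Let L be a positive integer, J > 0, h > 0 with h < 2J/L, and let h_L be the alternating-strips field on ℤ². Then for every finite set V ⊂ ℤ²: 2·|Σ_{t∈V} h_L(t)| ≤ h·L·|∂ᵛV|, and consequently, for every finite nonempty V, 2J·|∂V| + 2Σ_{t∈V} h_L(t) ≥ (2J − hL)·|∂V| and 2J·|∂V| − 2Σ_{t∈V} h_L(t) ≥ (2J − hL)·|∂V|. In particular the constant configurations σ⁺ ≡ +1 and σ⁻ ≡ −1 are ground states of the strips Ising Hamiltonian and satisfy the Peierls condition with Peierls constant 2J − hL. -/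
/-!
The field is a discrete vertical derivative of a bounded potential: with the sawtooth
`φ(y) = (-1)^⌊y/L⌋ · h · (y mod L - L/2)` one has `h_L(t) = φ(t₂ + 1) - φ(t₂)` and `|φ| ≤ hL/2`.
Summing over `V`, the sum telescopes to the values of `φ` at the far ends of the vertical
boundary edges, each counted with a sign, so `|Σ_V h_L| ≤ (hL/2)·|∂ᵛV|`. The energy bounds
follow since `|∂ᵛV| ≤ |∂V|` and `hL < 2J`.
-/

noncomputable def stripsField (L : ℕ) (h : ℝ) (t : ℤ × ℤ) : ℝ :=
  if Even (Int.fdiv t.2 (L : ℤ)) then h else -h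

/-- Total number of boundary edges `|∂V| = |∂ʰV| + |∂ᵛV|`. -/
def bdryCard (V : Finset (ℤ × ℤ)) : ℕ :=
  (bdry V (1, 0)).card + (bdry V (0, 1)).card

open Finset
open scoped symmDiff

theorem abs_sum_sub_sum_le_sum_abs_symmDiff {ι G : Type*} [DecidableEq ι] [AddCommGroup G]
    [LinearOrder G] [IsOrderedAddMonoid G] (s t : Finset ι) (f : ι → G) :
    |∑ i ∈ s, f i - ∑ i ∈ t, f i| ≤ ∑ i ∈ s ∆ t, |f i| := by
  rw [← sum_sdiff_sub_sum_sdiff, symmDiff_def, sup_eq_union, sum_union disjoint_sdiff_sdiff]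
  exact (abs_sub _ _).trans (add_le_add (abs_sum_le_sum_abs _ _) (abs_sum_le_sum_abs _ _))

theorem mem_bdry {V : Finset (ℤ × ℤ)} {e u : ℤ × ℤ} : u ∈ bdry V e ↔ ¬(u ∈ V ↔ u + e ∈ V) := by
  simp only [bdry, mem_filter, mem_union, mem_image, and_iff_right_iff_imp]
  intro hu
  by_cases huV : u ∈ V
  · exact .inl huV
  · exact .inr ⟨u + e, by tauto, add_sub_cancel_right u e⟩

theorem map_addRight_bdry (V : Finset (ℤ × ℤ)) (e : ℤ × ℤ) :
    (bdry V e).map (Equiv.addRight e).toEmbedding = V.map (Equiv.addRight e).toEmbedding ∆ V := by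
  ext s
  simp only [mem_map_equiv, mem_bdry, mem_symmDiff, Equiv.addRight_symm_apply, neg_add_cancel_right]
  tauto

theorem abs_sum_sub_le_card_bdry_mul (V : Finset (ℤ × ℤ)) (e : ℤ × ℤ) {g : ℤ × ℤ → ℝ} {C : ℝ}
    (hg : ∀ t, |g t| ≤ C) :
    |∑ t ∈ V, (g (t + e) - g t)| ≤ (bdry V e).card * C := by
  let τ := (Equiv.addRight e).toEmbedding
  calc |∑ t ∈ V, (g (t + e) - g t)| = |∑ s ∈ V.map τ, g s - ∑ t ∈ V, g t| := by
        rw [sum_sub_distrib, sum_map]; rfl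
    _ ≤ ∑ s ∈ V.map τ ∆ V, |g s| := abs_sum_sub_sum_le_sum_abs_symmDiff _ _ _
    _ ≤ (V.map τ ∆ V).card • C := sum_le_card_nsmul _ _ _ fun s _ => hg s
    _ = (bdry V e).card * C := by rw [← map_addRight_bdry, card_map, nsmul_eq_mul]

noncomputable def stripsPotential (L : ℕ) (h : ℝ) (y : ℤ) : ℝ :=
  (-1) ^ (y / L) * h * ((y % L : ℤ) - L / 2 : ℝ)

theorem stripsField_eq_neg_one_zpow_mul (L : ℕ) (h : ℝ) (t : ℤ × ℤ) :
    stripsField L h t = (-1) ^ (t.2 / L) * h := by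
  rw [stripsField, Int.fdiv_eq_ediv_of_nonneg _ (Int.natCast_nonneg L)]
  split_ifs with he
  · rw [he.neg_one_zpow, one_mul]
  · rw [(Int.not_even_iff_odd.1 he).neg_one_zpow, neg_one_mul]

theorem stripsPotential_add_mul {L : ℕ} (hL : 0 < L) (h : ℝ) {r : ℤ} (hr₀ : 0 ≤ r) (hrL : r < L)
    (q : ℤ) :
    stripsPotential L h (r + L * q) = (-1) ^ q * h * (r - L / 2) := by
  obtain ⟨hq, hr⟩ := (Int.ediv_emod_unique (Int.natCast_pos.2 hL)).2 ⟨rfl, hr₀, hrL⟩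
  rw [stripsPotential, hq, hr]

theorem stripsPotential_add_one_sub {L : ℕ} (hL : 0 < L) (h : ℝ) (y : ℤ) :
    stripsPotential L h (y + 1) - stripsPotential L h y = (-1) ^ (y / L) * h := by
  have hy := Int.emod_add_mul_ediv y L
  have hr₀ := Int.emod_nonneg y (Int.natCast_pos.2 hL).ne'
  have hrL := Int.emod_lt_of_pos y (Int.natCast_pos.2 hL)
  set q := y / L
  set r := y % L
  rcases (show r + 1 < L ∨ r + 1 = L by omega) with hlt | hwrap
  · rw [← hy, show r + L * q + 1 = (r + 1) + L * q by ring, stripsPotential_add_mul hL h hr₀ hrL,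
      stripsPotential_add_mul hL h (by omega) hlt]
    push_cast; ring
  · have hr : (r : ℝ) = L - 1 := by rw [eq_sub_iff_add_eq]; exact_mod_cast hwrap
    rw [← hy, show r + L * q + 1 = 0 + L * (q + 1) by rw [← hwrap]; ring,
      stripsPotential_add_mul hL h hr₀ hrL,
      stripsPotential_add_mul hL h le_rfl (Int.natCast_pos.2 hL), zpow_add_one₀ (by norm_num), hr]
    push_cast; ring

theorem abs_stripsPotential_le {L : ℕ} (hL : 0 < L) (h : ℝ) (y : ℤ) :
    |stripsPotential L h y| ≤ |h| * L / 2 := by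
  have hr₀ : (0 : ℝ) ≤ (y % L : ℤ) := by
    exact_mod_cast Int.emod_nonneg y (Int.natCast_pos.2 hL).ne'
  have hrL : ((y % L : ℤ) : ℝ) ≤ L := by
    exact_mod_cast (Int.emod_lt_of_pos y (Int.natCast_pos.2 hL)).le
  have hdev : |((y % L : ℤ) : ℝ) - L / 2| ≤ L / 2 := abs_le.2 ⟨by linarith, by linarith⟩
  rw [stripsPotential, abs_mul, abs_mul, abs_neg_one_zpow, one_mul, mul_div_assoc]
  exact mul_le_mul_of_nonneg_left hdev (abs_nonneg h)

theorem two_mul_abs_sum_stripsField_le {L : ℕ} (hL : 0 < L) (h : ℝ) (V : Finset (ℤ × ℤ)) :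
    2 * |∑ t ∈ V, stripsField L h t| ≤ |h| * L * (bdry V (0, 1)).card := by
  have htelescope : ∑ t ∈ V, stripsField L h t =
      ∑ t ∈ V, (stripsPotential L h (t + (0, 1)).2 - stripsPotential L h t.2) :=
    sum_congr rfl fun t _ => by
      rw [stripsField_eq_neg_one_zpow_mul, Prod.snd_add, stripsPotential_add_one_sub hL]
  have hbound := abs_sum_sub_le_card_bdry_mul V (0, 1) (abs_stripsPotential_le hL h ·.2)
  rw [htelescope]
  linarith

theorem peierls_condition_strips_general (L : ℕ) (hL : 0 < L) (J h : ℝ)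
    (hh : 0 < h) (hcond : h < 2 * J / (L : ℝ)) :
    (∀ V : Finset (ℤ × ℤ),
      2 * |∑ t ∈ V, stripsField L h t| ≤ h * (L : ℝ) * ((bdry V (0, 1)).card : ℝ)) ∧
    0 < 2 * J - h * (L : ℝ) ∧
    ∀ V : Finset (ℤ × ℤ), V.Nonempty →
      2 * J * (bdryCard V : ℝ) + 2 * ∑ t ∈ V, stripsField L h t ≥
        (2 * J - h * (L : ℝ)) * (bdryCard V : ℝ) ∧
      2 * J * (bdryCard V : ℝ) - 2 * ∑ t ∈ V, stripsField L h t ≥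
        (2 * J - h * (L : ℝ)) * (bdryCard V : ℝ) := by
  have hfield (V : Finset (ℤ × ℤ)) :
      2 * |∑ t ∈ V, stripsField L h t| ≤ h * L * (bdry V (0, 1)).card := by
    simpa only [abs_of_pos hh] using two_mul_abs_sum_stripsField_le hL h V
  have hgap : 0 < 2 * J - h * L := by
    rw [lt_div_iff₀ (Nat.cast_pos.2 hL)] at hcond
    linarith
  refine ⟨hfield, hgap, fun V _ => ?_⟩
  have hvert : ((bdry V (0, 1)).card : ℝ) ≤ bdryCard V := by
    rw [bdryCard, Nat.cast_add]
    exact le_add_of_nonneg_left (Nat.cast_nonneg _)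
  have hfield' : 2 * |∑ t ∈ V, stripsField L h t| ≤ h * L * bdryCard V :=
    (hfield V).trans (mul_le_mul_of_nonneg_left hvert (by positivity))
  constructor <;>
    linarith [neg_abs_le (∑ t ∈ V, stripsField L h t), le_abs_self (∑ t ∈ V, stripsField L h t)]

/-- Peierls condition for the alternating-strips model: if `h < 2J/L`
then for every finite `V ⊂ ℤ²` one has `2·|Σ_{t∈V} h_L(t)| ≤ h·L·|∂ᵛV|`; the Peierls
constant `2J − hL` is positive; and for every finite nonempty `V` the energy cost of
flipping `σ⁺ ≡ +1` or `σ⁻ ≡ −1` on `V`, namely `2J·|∂V| ± 2Σ_{t∈V} h_L(t)`, is at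
least `(2J − hL)·|∂V|`; i.e. `σ⁺` and `σ⁻` are ground states satisfying the Peierls
condition with Peierls constant `2J − hL`. -/
theorem peierls_condition_strips (L : ℕ) (hL : 0 < L) (J h : ℝ) (hJ : 0 < J)
    (hh : 0 < h) (hcond : h < 2 * J / (L : ℝ)) :
    (∀ V : Finset (ℤ × ℤ),
      2 * |∑ t ∈ V, stripsField L h t| ≤ h * (L : ℝ) * ((bdry V (0, 1)).card : ℝ)) ∧
    0 < 2 * J - h * (L : ℝ) ∧
    ∀ V : Finset (ℤ × ℤ), V.Nonempty →
      2 * J * (bdryCard V : ℝ) + 2 * ∑ t ∈ V, stripsField L h t ≥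
        (2 * J - h * (L : ℝ)) * (bdryCard V : ℝ) ∧
      2 * J * (bdryCard V : ℝ) - 2 * ∑ t ∈ V, stripsField L h t ≥
        (2 * J - h * (L : ℝ)) * (bdryCard V : ℝ) :=
  peierls_condition_strips_general L hL J h hh hcond
end
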